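/- arXiv:2305.12648 — 2 statements merged into one kernel-verified Lean document; each statement's English description precedes it below -/
import Mathlib

section
/- Let n be a natural number, let U be a set equipped with a free action of the symmetric group S_n, and let Y be a set; let S_n act on Y^n = (Fin n → Y) by permuting coordinates and diagonally on U × Y^n. Let p₁ : (U × Y^n)/S_n → U/S_n be the map induced by the first projection. Then for every u ∈ U, the fiber of p₁ over the orbit class of u is in bijection with Y^n = (Fin n → Y). -/
open MulAction

/-- The action of `S_n = Equiv.Perm (Fin n)` on `Fin n → Y` permuting the coordinates:
`(g • y) i = y (g⁻¹ i)`. -/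
instance permArrowAction (n : ℕ) (Y : Type*) :
    MulAction (Equiv.Perm (Fin n)) (Fin n → Y) where
  smul g y := fun i => y (g⁻¹ i)
  one_smul y := by
    funext i
    show y ((1 : Equiv.Perm (Fin n))⁻¹ i) = y i
    simp
  mul_smul g h y := by
    funext i
    show y ((g * h)⁻¹ i) = y (h⁻¹ (g⁻¹ i))
    simp [mul_inv_rev]

/-- The orbit-quotient map `q₀ : U → U/S_n`. -/
def q0 (n : ℕ) (U : Type*) [MulAction (Equiv.Perm (Fin n)) U] :
    U → Quotient (orbitRel (Equiv.Perm (Fin n)) U) := Quotient.mk _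

/-- The orbit-quotient map `q₁ : U × Yⁿ → (U × Yⁿ)/S_n`, for the diagonal action. -/
def q1 (n : ℕ) (U Y : Type*) [MulAction (Equiv.Perm (Fin n)) U] :
    U × (Fin n → Y) → Quotient (orbitRel (Equiv.Perm (Fin n)) (U × (Fin n → Y))) :=
  Quotient.mk _

/-- The map `p₁ : (U × Yⁿ)/S_n → U/S_n` induced by the first projection. -/
def p1 (n : ℕ) (U Y : Type*) [MulAction (Equiv.Perm (Fin n)) U] :
    Quotient (orbitRel (Equiv.Perm (Fin n)) (U × (Fin n → Y))) →
      Quotient (orbitRel (Equiv.Perm (Fin n)) U) :=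
  Quotient.lift (fun uy => q0 n U uy.1) (by
    rintro a b ⟨g, rfl⟩
    exact Quotient.sound ⟨g, rfl⟩)

/-- If `S_n` acts freely on `U`, then for every `u : U` the fiber of
`p₁ : (U × Yⁿ)/S_n → U/S_n` over the orbit class of `u` is in bijection with `Yⁿ`. -/
theorem fiber_equiv_pow (n : ℕ) (U Y : Type*)
    [MulAction (Equiv.Perm (Fin n)) U]
    (hfree : ∀ (g : Equiv.Perm (Fin n)) (u : U), g • u = u → g = 1) (u : U) :
    Nonempty
      ({c : Quotient (orbitRel (Equiv.Perm (Fin n)) (U × (Fin n → Y))) //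
          p1 n U Y c = q0 n U u} ≃ (Fin n → Y)) := by
  refine ⟨(Equiv.ofBijective (fun y => ⟨q1 n U Y (u, y), rfl⟩) ⟨?_, ?_⟩).symm⟩
  · intro y1 y2 h
    obtain ⟨g, hg⟩ := Quotient.exact (Subtype.mk_eq_mk.mp h)
    have h1 : g • u = u := congrArg Prod.fst hg
    have := hfree g u h1
    subst this
    have h2 : (1 : Equiv.Perm (Fin n)) • y2 = y1 := congrArg Prod.snd hg
    rw [one_smul] at h2
    exact h2.symm
  · rintro ⟨c, hc⟩
    obtain ⟨⟨v, y⟩, rfl⟩ := Quotient.exists_rep c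
    obtain ⟨g, hg⟩ := Quotient.exact hc
    have hg' : g • u = v := hg
    refine ⟨g⁻¹ • y, Subtype.ext (Quotient.sound ⟨g⁻¹, ?_⟩)⟩
    show g⁻¹ • (v, y) = (u, g⁻¹ • y)
    rw [Prod.smul_mk, ← hg', inv_smul_smul]
end

section
/- Let k ⊆ L be an extension of fields of characteristic zero such that k is relatively algebraically closed in L, i.e., every element of L that is algebraic over k lies in (the image of) k. Let n be a natural number. Then every irreducible polynomial f in the multivariate polynomial ring k[x₁, …, xₙ] remains irreducible in L[x₁, …, xₙ] (its image under the ring map induced by the inclusion k → L is irreducible). -/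
open MvPolynomial

section AuxiliaryLemmas


/-- A polynomial whose coefficients all lie in the range of `φ` is a `map φ` image. -/
lemma aux_exists_preimage {R S σ : Type*} [CommSemiring R] [CommSemiring S]
    (φ : R →+* S) (g : MvPolynomial σ S) (h : ∀ m, g.coeff m ∈ Set.range φ) :
    ∃ g₁ : MvPolynomial σ R, MvPolynomial.map φ g₁ = g := by
  classical
  refine ⟨∑ m ∈ g.support, monomial m (h m).choose, ?_⟩
  rw [map_sum]
  have : ∀ m ∈ g.support, (MvPolynomial.map φ) (monomial m (h m).choose)
      = monomial m (g.coeff m) := by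
    intro m _
    rw [map_monomial, (h m).choose_spec]
  rw [Finset.sum_congr rfl this, support_sum_monomial_coeff]

/-- Units in a multivariate polynomial ring over a field are the nonzero constants. -/
lemma aux_isUnit_iff {K : Type*} [Field K] {n : ℕ} {q : MvPolynomial (Fin n) K} :
    IsUnit q ↔ ∃ c : K, c ≠ 0 ∧ q = MvPolynomial.C c := by
  constructor
  · intro hq
    induction n with
    | zero =>
        refine ⟨q.coeff 0, ?_, eq_C_of_isEmpty q⟩
        intro h0
        have : q = 0 := by rw [eq_C_of_isEmpty q, h0, map_zero]
        exact hq.ne_zero this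
    | succ d ih =>
        have hq' : IsUnit (finSuccEquiv K d q) := hq.map _
        obtain ⟨r, hr, hrq⟩ := Polynomial.isUnit_iff.mp hq'
        obtain ⟨c, hc, rfl⟩ := ih hr
        refine ⟨c, hc, ?_⟩
        have : finSuccEquiv K d (MvPolynomial.C c) = Polynomial.C (MvPolynomial.C c) := by
          simp [finSuccEquiv_apply]
        exact (finSuccEquiv K d).injective (by rw [this, hrq])
  · rintro ⟨c, hc, rfl⟩
    exact (hc.isUnit).map MvPolynomial.C

lemma aux_exists_coeff_ne_zero {K : Type*} [Field K] {n : ℕ} {q : MvPolynomial (Fin n) K}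
    (h0 : q ≠ 0) (hu : ¬ IsUnit q) : ∃ m : Fin n →₀ ℕ, m ≠ 0 ∧ q.coeff m ≠ 0 := by
  by_contra hcon
  push_neg at hcon
  have hq : q = MvPolynomial.C (q.coeff 0) := by
    ext m
    by_cases hm : m = 0
    · subst hm; simp
    · rw [hcon m hm, coeff_C, if_neg (Ne.symm hm)]
  have : q.coeff 0 ≠ 0 := fun h => h0 (by rw [hq, h, map_zero])
  exact hu (aux_isUnit_iff.mpr ⟨q.coeff 0, this, hq⟩)

lemma aux_unit_reflect {A B : Type*} [Field A] [Field B] (φ : A →+* B) {n : ℕ}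
    {q : MvPolynomial (Fin n) A} (h : IsUnit (MvPolynomial.map φ q)) : IsUnit q := by
  by_contra hu
  have h0 : q ≠ 0 := by
    rintro rfl
    rw [map_zero] at h
    exact h.ne_zero rfl
  obtain ⟨m, hm, hcm⟩ := aux_exists_coeff_ne_zero h0 hu
  obtain ⟨c, _, hC⟩ := aux_isUnit_iff.mp h
  have : (MvPolynomial.map φ q).coeff m = 0 := by rw [hC, coeff_C, if_neg (Ne.symm hm)]
  rw [coeff_map] at this
  exact hcm (φ.injective (by rw [this, map_zero]))

set_option maxHeartbeats 1000000 in
set_option synthInstance.maxHeartbeats 200000 in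
/-- Irreducible polynomials over an algebraically closed field remain irreducible over any
field extension. -/
lemma aux_irreducible_map_of_isAlgClosed {K M : Type*} [Field K] [IsAlgClosed K] [Field M]
    [Algebra K M] {n : ℕ} {p : MvPolynomial (Fin n) K} (hp : Irreducible p) :
    Irreducible (MvPolynomial.map (algebraMap K M) p) := by
  classical
  constructor
  · exact fun h => hp.not_isUnit (aux_unit_reflect _ h)
  · intro g h heq
    by_contra hcon
    push_neg at hcon
    obtain ⟨hgu, hhu⟩ := hcon
    have hp0 : p ≠ 0 := hp.ne_zero
    have hmap0 : MvPolynomial.map (algebraMap K M) p ≠ 0 := fun h0 =>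
      hp0 (MvPolynomial.map_injective _ (algebraMap K M).injective (by rw [h0, map_zero]))
    have hg0 : g ≠ 0 := fun h0 => hmap0 (by rw [heq, h0, zero_mul])
    have hh0 : h ≠ 0 := fun h0 => hmap0 (by rw [heq, h0, mul_zero])
    obtain ⟨ma, hma, hga⟩ := aux_exists_coeff_ne_zero hg0 hgu
    obtain ⟨mb, hmb, hhb⟩ := aux_exists_coeff_ne_zero hh0 hhu
    -- the finitely generated subalgebra containing all coefficients
    set s : Finset M := g.support.image g.coeff ∪ h.support.image h.coeff with hs
    set T : Subalgebra K M := Algebra.adjoin K (s : Set M) with hT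
    have hgT : ∀ m, g.coeff m ∈ T := by
      intro m
      by_cases hm : m ∈ g.support
      · exact Algebra.subset_adjoin (by simp only [hs, Finset.coe_union, Set.mem_union, Finset.coe_image, Set.mem_image, Finset.mem_coe]; exact Or.inl ⟨m, hm, rfl⟩)
      · rw [notMem_support_iff.mp hm]; exact zero_mem T
    have hhT : ∀ m, h.coeff m ∈ T := by
      intro m
      by_cases hm : m ∈ h.support
      · exact Algebra.subset_adjoin (by simp only [hs, Finset.coe_union, Set.mem_union, Finset.coe_image, Set.mem_image, Finset.mem_coe]; exact Or.inr ⟨m, hm, rfl⟩)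
      · rw [notMem_support_iff.mp hm]; exact zero_mem T
    have hTinj : Function.Injective (algebraMap T M) := Subtype.val_injective
    obtain ⟨g₁, hg₁⟩ := aux_exists_preimage (algebraMap T M) g
      (fun m => ⟨⟨g.coeff m, hgT m⟩, rfl⟩)
    obtain ⟨h₁, hh₁⟩ := aux_exists_preimage (algebraMap T M) h
      (fun m => ⟨⟨h.coeff m, hhT m⟩, rfl⟩)
    set a : T := ⟨g.coeff ma, hgT ma⟩ with ha
    set b : T := ⟨h.coeff mb, hhT mb⟩ with hb
    set t : T := a * b with htdef
    have ht0 : t ≠ 0 := by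
      intro h0
      have : (g.coeff ma) * (h.coeff mb) = 0 := congrArg Subtype.val h0
      exact (mul_ne_zero hga hhb) this
    -- the localization away from t
    letI T' := Localization.Away t
    haveI : IsDomain T := Function.Injective.isDomain (T.toSubring.subtype) Subtype.val_injective
    haveI : IsDomain T' := IsLocalization.isDomain_of_le_nonZeroDivisors T'
      (powers_le_nonZeroDivisors_of_noZeroDivisors ht0)
    haveI : IsScalarTower K T T' := inferInstance
    haveI hftKT : Algebra.FiniteType K T :=
      (Subalgebra.fg_iff_finiteType T).mp (Subalgebra.fg_adjoin_finset s)
    haveI hftTT' : Algebra.FiniteType T T' :=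
      IsLocalization.finiteType_of_monoid_fg (Submonoid.powers t) T'
    haveI : Algebra.FiniteType K T' := Algebra.FiniteType.trans hftKT hftTT'
    obtain ⟨I, hI⟩ := Ideal.exists_maximal T'
    letI : Field (T' ⧸ I) := Ideal.Quotient.field I
    haveI : Algebra.FiniteType K (T' ⧸ I) :=
      Algebra.FiniteType.of_surjective
        (Ideal.Quotient.mkₐ K I) (Ideal.Quotient.mkₐ_surjective K I)
    haveI : Module.Finite K (T' ⧸ I) := finite_of_finite_type_of_isJacobsonRing K (T' ⧸ I)
    haveI : Algebra.IsIntegral K (T' ⧸ I) := Algebra.IsIntegral.of_finite K (T' ⧸ I)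
    have hsurj : Function.Surjective (algebraMap K (T' ⧸ I)) :=
      IsAlgClosed.algebraMap_bijective_of_isIntegral.2
    have hinj : Function.Injective (algebraMap K (T' ⧸ I)) := (algebraMap K (T' ⧸ I)).injective
    let e : K ≃+* (T' ⧸ I) := RingEquiv.ofBijective (algebraMap K (T' ⧸ I)) ⟨hinj, hsurj⟩
    let ψ : T →+* K := e.symm.toRingHom.comp ((Ideal.Quotient.mk I).comp (algebraMap T T'))
    have hψK : ψ.comp (algebraMap K T) = RingHom.id K := by
      ext x
      have : (Ideal.Quotient.mk I) ((algebraMap T T') ((algebraMap K T) x))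
          = algebraMap K (T' ⧸ I) x := rfl
      simp only [ψ, RingHom.comp_apply, this, RingHom.id_apply]
      exact e.symm_apply_apply x
    -- ψ t is a unit in K
    have htunit : IsUnit (ψ t) := by
      have h1 : IsUnit (algebraMap T T' t) := IsLocalization.Away.algebraMap_isUnit t
      have h2 : IsUnit ((Ideal.Quotient.mk I) ((algebraMap T T') t)) := h1.map _
      exact h2.map e.symm.toRingHom
    have hψa : ψ a ≠ 0 := by
      intro h0
      apply htunit.ne_zero
      rw [htdef, map_mul, h0, zero_mul]
    have hψb : ψ b ≠ 0 := by
      intro h0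
      apply htunit.ne_zero
      rw [htdef, map_mul, h0, mul_zero]
    -- transport the factorization
    have hfact : g₁ * h₁ = MvPolynomial.map (algebraMap K T) p := by
      apply MvPolynomial.map_injective (algebraMap T M) hTinj
      rw [map_mul, hg₁, hh₁, ← heq, MvPolynomial.map_map,
        ← IsScalarTower.algebraMap_eq K T M]
    have hKfact : (MvPolynomial.map ψ g₁) * (MvPolynomial.map ψ h₁) = p := by
      have := congrArg (MvPolynomial.map ψ) hfact
      rw [map_mul, MvPolynomial.map_map, hψK, MvPolynomial.map_id] at this
      exact this
    -- both mapped factors are non-units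
    have hg₁a : g₁.coeff ma = a := by
      apply hTinj
      have : (MvPolynomial.map (algebraMap T M) g₁).coeff ma = g.coeff ma := by rw [hg₁]
      rw [coeff_map] at this
      exact this
    have hh₁b : h₁.coeff mb = b := by
      apply hTinj
      have : (MvPolynomial.map (algebraMap T M) h₁).coeff mb = h.coeff mb := by rw [hh₁]
      rw [coeff_map] at this
      exact this
    have hg2 : ¬ IsUnit (MvPolynomial.map ψ g₁) := by
      intro hu
      obtain ⟨c, _, hC⟩ := aux_isUnit_iff.mp hu
      have : (MvPolynomial.map ψ g₁).coeff ma = 0 := by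
        rw [hC, coeff_C, if_neg (Ne.symm hma)]
      rw [coeff_map, hg₁a] at this
      exact hψa this
    have hh2 : ¬ IsUnit (MvPolynomial.map ψ h₁) := by
      intro hu
      obtain ⟨c, _, hC⟩ := aux_isUnit_iff.mp hu
      have : (MvPolynomial.map ψ h₁).coeff mb = 0 := by
        rw [hC, coeff_C, if_neg (Ne.symm hmb)]
      rw [coeff_map, hh₁b] at this
      exact hψb this
    rcases hp.isUnit_or_isUnit hKfact.symm with hu | hu
    · exact hg2 hu
    · exact hh2 hu

/-- Every divisor of (the image of) a polynomial with coefficients in an algebraically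
closed subfield is a constant multiple of a polynomial over that subfield. -/
lemma aux_divisor_descent {K M : Type*} [Field K] [IsAlgClosed K] [Field M]
    [Algebra K M] {n : ℕ} (F : MvPolynomial (Fin n) K) (hF : F ≠ 0)
    (g : MvPolynomial (Fin n) M) (hg : g ∣ MvPolynomial.map (algebraMap K M) F) :
    ∃ (c : M) (G : MvPolynomial (Fin n) K), c ≠ 0 ∧
      g = MvPolynomial.C c * MvPolynomial.map (algebraMap K M) G := by
  classical
  set φ : MvPolynomial (Fin n) K →+* MvPolynomial (Fin n) M :=
    (MvPolynomial.map (algebraMap K M)) with hφ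
  have hmapF : φ F ≠ 0 := fun h0 =>
    hF (MvPolynomial.map_injective _ (algebraMap K M).injective (by rw [h0, map_zero]))
  revert hg
  refine UniqueFactorizationMonoid.induction_on_prime g ?_ ?_ ?_
  · intro hg
    exact absurd (zero_dvd_iff.mp hg) hmapF
  · intro x hx _
    obtain ⟨c, hc, rfl⟩ := aux_isUnit_iff.mp hx
    exact ⟨c, 1, hc, by rw [map_one, mul_one]⟩
  · intro a p ha hp IH hdvd
    have hpF : p ∣ φ F := (dvd_mul_right p a).trans hdvd
    obtain ⟨c, G, hc, rfl⟩ := IH ((dvd_mul_left a p).trans hdvd)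
    -- factor F into irreducibles over K
    have hassoc := UniqueFactorizationMonoid.factors_prod hF
    obtain ⟨u, hu⟩ := hassoc
    have hφu : IsUnit (φ ↑u) := u.isUnit.map φ
    have hpprod : p ∣ ((UniqueFactorizationMonoid.factors F).map φ).prod := by
      have h1 : φ F = ((UniqueFactorizationMonoid.factors F).map φ).prod * φ ↑u := by
        rw [← map_multiset_prod, ← map_mul, hu]
      rw [h1] at hpF
      exact (hφu.dvd_mul_right).mp hpF
    obtain ⟨q', hq'mem, hpq'⟩ := hp.exists_mem_multiset_dvd hpprod
    obtain ⟨q₀, hq₀mem, rfl⟩ := Multiset.mem_map.mp hq'mem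
    have hq₀irr : Irreducible q₀ := UniqueFactorizationMonoid.irreducible_of_factor q₀ hq₀mem
    have hφq₀irr : Irreducible (φ q₀) := aux_irreducible_map_of_isAlgClosed hq₀irr
    obtain ⟨r, hr⟩ := hpq'
    rcases hφq₀irr.isUnit_or_isUnit hr with hru | hru
    · exact absurd hru hp.not_unit
    obtain ⟨cr, hcr, rfl⟩ := aux_isUnit_iff.mp hru
    refine ⟨cr⁻¹ * c, q₀ * G, mul_ne_zero (inv_ne_zero hcr) hc, ?_⟩
    have hpeq : p = MvPolynomial.C cr⁻¹ * φ q₀ := by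
      have : MvPolynomial.C cr⁻¹ * (p * MvPolynomial.C cr) = p := by
        rw [mul_comm p, ← mul_assoc, ← map_mul, inv_mul_cancel₀ hcr, map_one, one_mul]
      rw [← this, ← hr]
    rw [hpeq, map_mul φ, map_mul]
    try ring

end AuxiliaryLemmas

/-- Let `k ⊆ L` be fields of characteristic zero with `k` relatively algebraically
closed in `L` (every element of `L` algebraic over `k` lies in the image of `k`).
Then every irreducible polynomial in `k[x₁, …, xₙ]` remains irreducible in
`L[x₁, …, xₙ]`. -/
theorem irreducible_mvPolynomial_map_of_relatively_algebraically_closed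
    (k L : Type*) [Field k] [Field L] [CharZero k] [Algebra k L]
    (hk : ∀ x : L, IsAlgebraic k x → x ∈ (algebraMap k L).range)
    (n : ℕ) (f : MvPolynomial (Fin n) k) (hf : Irreducible f) :
    Irreducible (MvPolynomial.map (algebraMap k L) f) := by
  classical
  let M := AlgebraicClosure L
  let Kb := algebraicClosure k M
  haveI : IsAlgClosed ↥Kb := (algebraicClosure.isAlgClosure k M).isAlgClosed
  have hKbinj : Function.Injective (algebraMap ↥Kb M) := (algebraMap ↥Kb M).injective
  have hLMinj : Function.Injective (algebraMap L M) := (algebraMap L M).injective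
  have hkLinj : Function.Injective (algebraMap k L) := (algebraMap k L).injective
  have hf0 : f ≠ 0 := hf.ne_zero
  have hmapf0 : MvPolynomial.map (algebraMap k L) f ≠ 0 := fun h0 =>
    hf0 (MvPolynomial.map_injective _ hkLinj (by rw [h0, map_zero]))
  have hFb0 : MvPolynomial.map (algebraMap k ↥Kb) f ≠ 0 := fun h0 =>
    hf0 (MvPolynomial.map_injective _ (algebraMap k ↥Kb).injective (by rw [h0, map_zero]))
  have hmapeq : MvPolynomial.map (algebraMap L M) (MvPolynomial.map (algebraMap k L) f)
      = MvPolynomial.map (algebraMap ↥Kb M) (MvPolynomial.map (algebraMap k ↥Kb) f) := by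
    rw [MvPolynomial.map_map, MvPolynomial.map_map, ← IsScalarTower.algebraMap_eq,
      ← IsScalarTower.algebraMap_eq]
  constructor
  · exact fun hu => hf.not_isUnit (aux_unit_reflect (algebraMap k L) hu)
  · intro g h heq
    -- Key: every divisor of `map f` in `L[x]` is a constant multiple of a polynomial over `k`.
    have key : ∀ u : MvPolynomial (Fin n) L,
        u ∣ MvPolynomial.map (algebraMap k L) f →
        ∃ (c : L) (U : MvPolynomial (Fin n) k), c ≠ 0 ∧
          u = MvPolynomial.C c * MvPolynomial.map (algebraMap k L) U := by
      intro u hu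
      have hu0 : u ≠ 0 := by
        rintro rfl
        exact hmapf0 (zero_dvd_iff.mp hu)
      have humap0 : MvPolynomial.map (algebraMap L M) u ≠ 0 := fun h0 =>
        hu0 (MvPolynomial.map_injective _ hLMinj (by rw [h0, map_zero]))
      have hdvd : MvPolynomial.map (algebraMap L M) u
          ∣ MvPolynomial.map (algebraMap ↥Kb M) (MvPolynomial.map (algebraMap k ↥Kb) f) := by
        rw [← hmapeq]
        obtain ⟨v, hv⟩ := hu
        exact ⟨MvPolynomial.map (algebraMap L M) v, by rw [hv, map_mul]⟩
      obtain ⟨c, G, hc, hgG⟩ := aux_divisor_descent _ hFb0 _ hdvd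
      have hG0 : G ≠ 0 := by
        rintro rfl
        rw [map_zero, mul_zero] at hgG
        exact humap0 hgG
      obtain ⟨m₀, hm₀⟩ := Finset.nonempty_iff_ne_empty.mpr
        (fun hemp => hG0 (support_eq_empty.mp hemp))
      have hγ : G.coeff m₀ ≠ 0 := mem_support_iff.mp hm₀
      have hvγ : algebraMap ↥Kb M (G.coeff m₀) ≠ 0 := fun h0 =>
        hγ (hKbinj (by rw [h0, map_zero]))
      have hcoeff : ∀ m, algebraMap L M (u.coeff m)
          = c * algebraMap ↥Kb M (G.coeff m) := by
        intro m
        have := congrArg (fun q => MvPolynomial.coeff m q) hgG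
        simpa [coeff_map, coeff_C_mul] using this
      have hum₀ : u.coeff m₀ ≠ 0 := by
        intro h0
        have h1 := hcoeff m₀
        rw [h0, map_zero] at h1
        exact mul_ne_zero hc hvγ h1.symm
      have hyx : ∀ m, algebraMap L M (u.coeff m * (u.coeff m₀)⁻¹)
          = algebraMap ↥Kb M (G.coeff m * (G.coeff m₀)⁻¹) := by
        intro m
        rw [map_mul, map_mul, map_inv₀, map_inv₀, hcoeff m, hcoeff m₀, mul_inv]
        calc c * algebraMap ↥Kb M (G.coeff m) * (c⁻¹ * (algebraMap ↥Kb M (G.coeff m₀))⁻¹)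
            = (c * c⁻¹) * (algebraMap ↥Kb M (G.coeff m)
              * (algebraMap ↥Kb M (G.coeff m₀))⁻¹) := by ring
          _ = algebraMap ↥Kb M (G.coeff m) * (algebraMap ↥Kb M (G.coeff m₀))⁻¹ := by
              rw [mul_inv_cancel₀ hc, one_mul]
      have hrange : ∀ m, (MvPolynomial.C (u.coeff m₀)⁻¹ * u).coeff m
          ∈ Set.range (algebraMap k L) := by
        intro m
        have halg : IsAlgebraic k (u.coeff m * (u.coeff m₀)⁻¹) := by
          have hmem : ((G.coeff m * (G.coeff m₀)⁻¹ : ↥Kb) : M) ∈ algebraicClosure k M :=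
            (G.coeff m * (G.coeff m₀)⁻¹ : ↥Kb).2
          have h1 : IsAlgebraic k ((algebraMap ↥Kb M) (G.coeff m * (G.coeff m₀)⁻¹)) :=
            mem_algebraicClosure_iff.mp hmem
          rw [← hyx m] at h1
          exact (isAlgebraic_algebraMap_iff hLMinj).mp h1
        obtain ⟨z, hz⟩ := hk _ halg
        refine ⟨z, ?_⟩
        rw [coeff_C_mul, hz, mul_comm]
      obtain ⟨U, hU⟩ := aux_exists_preimage (algebraMap k L) _ hrange
      refine ⟨u.coeff m₀, U, hum₀, ?_⟩
      rw [hU, ← mul_assoc, ← map_mul, mul_inv_cancel₀ hum₀, map_one, one_mul]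
    obtain ⟨cg, Ug, hcg, hgeq⟩ := key g ⟨h, heq⟩
    obtain ⟨ch, Uh, hch, hheq⟩ := key h ⟨g, by rw [heq, mul_comm]⟩
    have hcomb : MvPolynomial.map (algebraMap k L) f
        = MvPolynomial.C (cg * ch) * MvPolynomial.map (algebraMap k L) (Ug * Uh) := by
      rw [heq, hgeq, hheq, map_mul (MvPolynomial.map (algebraMap k L)),
        map_mul (MvPolynomial.C : L →+* MvPolynomial (Fin n) L)]
      ring
    have hD0 : Ug * Uh ≠ 0 := by
      rintro hD
      rw [hD, map_zero, mul_zero] at hcomb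
      exact hmapf0 hcomb
    obtain ⟨m₁, hm₁⟩ := Finset.nonempty_iff_ne_empty.mpr
      (fun hemp => hD0 (support_eq_empty.mp hemp))
    have hd : (Ug * Uh).coeff m₁ ≠ 0 := mem_support_iff.mp hm₁
    have hd' : algebraMap k L ((Ug * Uh).coeff m₁) ≠ 0 := fun h0 =>
      hd (hkLinj (by rw [h0, map_zero]))
    have hco : algebraMap k L (f.coeff m₁)
        = (cg * ch) * algebraMap k L ((Ug * Uh).coeff m₁) := by
      have := congrArg (fun q => MvPolynomial.coeff m₁ q) hcomb
      simp only [coeff_map, coeff_C_mul] at this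
      exact this
    set w : k := f.coeff m₁ * ((Ug * Uh).coeff m₁)⁻¹ with hwdef
    have hw : algebraMap k L w = cg * ch := by
      rw [hwdef, map_mul, map_inv₀, hco, mul_assoc,
        mul_inv_cancel₀ hd', mul_one]
    have hw' : algebraMap k L w ≠ 0 := by
      rw [hw]; exact mul_ne_zero hcg hch
    have hw0 : w ≠ 0 := fun h0 => hw' (by rw [h0, map_zero])
    have hfeq : f = (MvPolynomial.C w * Ug) * Uh := by
      apply MvPolynomial.map_injective (algebraMap k L) hkLinj
      rw [hcomb, map_mul (MvPolynomial.map (algebraMap k L)) (MvPolynomial.C w * Ug) Uh,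
        map_mul (MvPolynomial.map (algebraMap k L)) (MvPolynomial.C w) Ug,
        MvPolynomial.map_C, hw, map_mul (MvPolynomial.map (algebraMap k L)) Ug Uh,
        map_mul (MvPolynomial.C : L →+* MvPolynomial (Fin n) L)]
      ring
    rcases hf.isUnit_or_isUnit hfeq with hcase | hcase
    · -- `C w * Ug` is a unit, hence `g` is a unit
      left
      have h1 : IsUnit (MvPolynomial.map (algebraMap k L) (MvPolynomial.C w * Ug)) :=
        hcase.map _
      rw [map_mul (MvPolynomial.map (algebraMap k L)), MvPolynomial.map_C] at h1
      have hCC : (MvPolynomial.C (algebraMap k L w)⁻¹ : MvPolynomial (Fin n) L)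
          * MvPolynomial.C (algebraMap k L w) = 1 := by
        rw [← map_mul, inv_mul_cancel₀ hw', map_one]
      have hgu : g = (MvPolynomial.C cg * MvPolynomial.C (algebraMap k L w)⁻¹)
          * (MvPolynomial.C (algebraMap k L w)
            * MvPolynomial.map (algebraMap k L) Ug) := by
        calc g = MvPolynomial.C cg * MvPolynomial.map (algebraMap k L) Ug := hgeq
          _ = MvPolynomial.C cg * ((MvPolynomial.C (algebraMap k L w)⁻¹
              * MvPolynomial.C (algebraMap k L w))
              * MvPolynomial.map (algebraMap k L) Ug) := by rw [hCC, one_mul]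
          _ = _ := by ring
      rw [hgu]
      exact (((hcg.isUnit).map MvPolynomial.C).mul
        (((inv_ne_zero hw').isUnit).map MvPolynomial.C)).mul h1
    · -- `Uh` is a unit, hence `h` is a unit
      right
      have h1 : IsUnit (MvPolynomial.map (algebraMap k L) Uh) := hcase.map _
      rw [hheq]
      exact ((hch.isUnit).map MvPolynomial.C).mul h1
end
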